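/- arXiv:1711.09153 — 4 statements merged into one kernel-verified Lean document; each statement's English description precedes it below -/
import Mathlib

section
/- (FCIQMC spawning error bound) Let a ∈ R^N be a vector with K = ‖a‖_0 ≥ 1 nonzero entries. Pick index j uniformly among the K nonzero entries, and let n be an integer random variable with n = ⌊K|a(j)|⌋ or ⌊K|a(j)|⌋+1 such that E[n | j] = K|a(j)|. Set X = n·sgn(a(j))·e_j. Then E[X] = a and E[‖X − a‖_2²] ≤ (K − 1)‖a‖_2² + 1/4. -/
open MeasureTheory Finset

/-!
Given `J = j`, the spawn count `n` is `⌊x⌋` or `⌊x⌋ + 1` (with `x = K|a(j)|`) with probabilities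
`1 - fract x` and `fract x`, so it has mean `x` and variance `fract x (1 - fract x) ≤ 1/4`.
As `J` is uniform on the `K` nonzero entries, `E[X] = ∑ⱼ (1/K) (K|a(j)|) sgn(a(j)) e_j = a`.
Moreover `‖X - a‖² = (n - |a(J)|)² + ‖a‖² - a(J)²`, and the bias-variance decomposition around
`|a(j)| = x/K` gives `E[(n - |a(j)|)² | J = j] = fract x (1 - fract x) + (K - 1)² a(j)²`;
averaging over `j` yields `(K - 1)‖a‖² + 1/4`.
-/

namespace Real

theorem abs_mul_sign (r : ℝ) : |r| * sign r = r := by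
  rcases lt_trichotomy r 0 with h | rfl | h
  · rw [sign_of_neg h, abs_of_neg h]; ring
  · simp
  · rw [sign_of_pos h, abs_of_pos h]; ring

theorem sign_sq_of_ne_zero {r : ℝ} (hr : r ≠ 0) : sign r ^ 2 = 1 := by
  rcases sign_apply_eq_of_ne_zero r hr with h | h <;> simp [h]

end Real

theorem stochastic_rounding_mean (x : ℝ) :
    (1 - Int.fract x) * ⌊x⌋ + Int.fract x * (⌊x⌋ + 1) = x := by
  rw [← Int.self_sub_fract x]
  ring

theorem stochastic_rounding_second_moment (x c : ℝ) :
    (1 - Int.fract x) * (⌊x⌋ - c) ^ 2 + Int.fract x * (⌊x⌋ + 1 - c) ^ 2 =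
      Int.fract x * (1 - Int.fract x) + (x - c) ^ 2 := by
  rw [← Int.self_sub_fract x]
  ring

theorem Finset.sum_product_range_two {ι M : Type*} [AddCommMonoid M] (S : Finset ι)
    (f : ι × ℕ → M) : ∑ p ∈ S ×ˢ range 2, f p = ∑ j ∈ S, (f (j, 0) + f (j, 1)) := by
  simp [sum_product, sum_range_succ]

theorem integral_eq_sum_of_pairwiseDisjoint {Ω ι E : Type*} {mΩ : MeasurableSpace Ω}
    [NormedAddCommGroup E] [NormedSpace ℝ E] [CompleteSpace E]
    (μ : Measure Ω) [IsProbabilityMeasure μ] (T : Finset ι) (A : ι → Set Ω)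
    (hA : ∀ k ∈ T, MeasurableSet (A k)) (hdisj : (T : Set ι).PairwiseDisjoint A)
    (hsum : ∑ k ∈ T, μ.real (A k) = 1) (g : Ω → E) (v : ι → E)
    (hg : ∀ k ∈ T, ∀ ω ∈ A k, g ω = v k) :
    ∫ ω, g ω ∂μ = ∑ k ∈ T, μ.real (A k) • v k := by
  have hcover : μ (⋃ k ∈ T, A k) = 1 := by
    rw [← ENNReal.toReal_eq_one_iff, ← measureReal_def, measureReal_biUnion_finset hdisj hA, hsum]
  have hrestrict : μ.restrict (⋃ k ∈ T, A k) = μ := by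
    refine Measure.restrict_eq_self_of_ae_mem ?_
    rw [ae_iff, ← Set.compl_def, prob_compl_eq_zero_iff (T.measurableSet_biUnion hA)]
    exact hcover
  have hgA : ∀ k ∈ T, ∫ ω in A k, g ω ∂μ = μ.real (A k) • v k := fun k hk => by
    rw [setIntegral_congr_fun (hA k hk) (hg k hk), setIntegral_const]
  have hint : ∀ k ∈ T, IntegrableOn g (A k) μ := fun k hk =>
    (integrableOn_const (measure_ne_top μ _)).congr_fun (fun ω hω => (hg k hk ω hω).symm) (hA k hk)
  calc ∫ ω, g ω ∂μ = ∫ ω in ⋃ k ∈ T, A k, g ω ∂μ := by rw [hrestrict]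
    _ = ∑ k ∈ T, μ.real (A k) • v k := by
      rw [integral_biUnion_finset T hA hdisj hint]
      exact sum_congr rfl hgA

theorem integral_comp_uniform_stochastic_rounding {Ω ι E : Type*} {mΩ : MeasurableSpace Ω}
    [MeasurableSpace ι] [MeasurableSingletonClass ι]
    [NormedAddCommGroup E] [NormedSpace ℝ E] [CompleteSpace E]
    (μ : Measure Ω) [IsProbabilityMeasure μ] (S : Finset ι) (hS : S.Nonempty) (x : ι → ℝ)
    (J : Ω → ι) (n : Ω → ℕ) (hJmeas : Measurable J) (hnmeas : Measurable n)
    (hlaw1 : ∀ j ∈ S, μ {ω | J ω = j ∧ (n ω : ℤ) = ⌊x j⌋} =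
      ENNReal.ofReal ((1 - Int.fract (x j)) / S.card))
    (hlaw2 : ∀ j ∈ S, μ {ω | J ω = j ∧ (n ω : ℤ) = ⌊x j⌋ + 1} =
      ENNReal.ofReal (Int.fract (x j) / S.card))
    (g : ι → ℤ → E) :
    ∫ ω, g (J ω) (n ω) ∂μ = ∑ j ∈ S,
      (((1 - Int.fract (x j)) / S.card) • g j ⌊x j⌋ +
        (Int.fract (x j) / S.card) • g j (⌊x j⌋ + 1)) := by
  have hK : (0 : ℝ) < S.card := by exact_mod_cast hS.card_pos
  set A : ι × ℕ → Set Ω := fun p => {ω | J ω = p.1 ∧ (n ω : ℤ) = ⌊x p.1⌋ + p.2} with hAdef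
  have hA : ∀ p, MeasurableSet (A p) := fun p =>
    (hJmeas (measurableSet_singleton p.1)).inter
      (hnmeas (MeasurableSet.of_discrete (s := {m : ℕ | (m : ℤ) = ⌊x p.1⌋ + p.2})))
  have hdisj : ((S ×ˢ range 2 : Finset (ι × ℕ)) : Set (ι × ℕ)).PairwiseDisjoint A := by
    rintro ⟨j, d⟩ - ⟨j', d'⟩ - hne
    refine Set.disjoint_left.mpr ?_
    rintro ω ⟨rfl, hd⟩ ⟨rfl, hd'⟩
    exact hne (Prod.ext rfl (by simp only at hd hd'; omega))
  have hmass0 : ∀ j ∈ S, μ.real (A (j, 0)) = (1 - Int.fract (x j)) / S.card := fun j hj => by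
    simp only [hAdef, Nat.cast_zero, add_zero, measureReal_def, hlaw1 j hj]
    exact ENNReal.toReal_ofReal (div_nonneg (by linarith [Int.fract_lt_one (x j)]) hK.le)
  have hmass1 : ∀ j ∈ S, μ.real (A (j, 1)) = Int.fract (x j) / S.card := fun j hj => by
    simp only [hAdef, Nat.cast_one, measureReal_def, hlaw2 j hj]
    exact ENNReal.toReal_ofReal (div_nonneg (Int.fract_nonneg _) hK.le)
  have hsum : ∑ p ∈ S ×ˢ range 2, μ.real (A p) = 1 := by
    rw [sum_product_range_two,
      sum_congr rfl fun j hj => by rw [hmass0 j hj, hmass1 j hj, ← add_div, sub_add_cancel],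
      sum_const, nsmul_eq_mul, mul_one_div_cancel hK.ne']
  rw [integral_eq_sum_of_pairwiseDisjoint μ _ A (fun p _ => hA p) hdisj hsum
    (fun ω => g (J ω) (n ω)) (fun p => g p.1 (⌊x p.1⌋ + p.2))
    (by rintro ⟨j, d⟩ - ω ⟨rfl, hd⟩; simp only [hd]), sum_product_range_two]
  refine sum_congr rfl fun j hj => ?_
  simp only [hmass0 j hj, hmass1 j hj, Nat.cast_zero, add_zero, Nat.cast_one]

theorem sum_sq_single_sub {ι : Type*} [Fintype ι] [DecidableEq ι] (a : ι → ℝ) (j : ι) (t : ℝ) :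
    ∑ i, ((Pi.single j t : ι → ℝ) i - a i) ^ 2 = (t - a j) ^ 2 + (∑ i, a i ^ 2 - a j ^ 2) := by
  rw [Fintype.sum_eq_add_sum_compl j, Fintype.sum_eq_add_sum_compl j (fun i => a i ^ 2),
    Pi.single_eq_same, add_sub_cancel_left]
  congr 1
  refine sum_congr rfl fun i hi => ?_
  rw [Pi.single_eq_of_ne (mem_compl.mp hi ∘ mem_singleton.mpr), zero_sub, neg_sq]

section Spawning

variable {ι : Type*} [DecidableEq ι] {K : ℝ}

theorem spawn_mean_single (hK : K ≠ 0) (r : ℝ) (j : ι) :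
    ((1 - Int.fract (K * |r|)) / K) • Pi.single j (((⌊K * |r|⌋ : ℤ) : ℝ) * Real.sign r) +
      (Int.fract (K * |r|) / K) • Pi.single j (((⌊K * |r|⌋ + 1 : ℤ) : ℝ) * Real.sign r) =
      (Pi.single j r : ι → ℝ) := by
  rw [← Pi.single_smul, ← Pi.single_smul, ← Pi.single_add]
  congr 1
  push_cast
  calc _ = ((1 - Int.fract (K * |r|)) * ⌊K * |r|⌋ + Int.fract (K * |r|) * (⌊K * |r|⌋ + 1)) / K *
          Real.sign r := by simp only [smul_eq_mul]; ring
    _ = r := by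
      rw [stochastic_rounding_mean, mul_div_cancel_left₀ _ hK, Real.abs_mul_sign]

theorem spawn_sq_error_le (hK : 0 < K) {r : ℝ} (hr : r ≠ 0) (R : ℝ) :
    ((1 - Int.fract (K * |r|)) / K) * ((((⌊K * |r|⌋ : ℤ) : ℝ) * Real.sign r - r) ^ 2 + R) +
      (Int.fract (K * |r|) / K) * ((((⌊K * |r|⌋ + 1 : ℤ) : ℝ) * Real.sign r - r) ^ 2 + R) ≤
      (1 / 4 + (K - 1) ^ 2 * r ^ 2 + R) / K := by
  have hsq : ∀ m : ℝ, (m * Real.sign r - r) ^ 2 = (m - |r|) ^ 2 := fun m => by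
    calc (m * Real.sign r - r) ^ 2 = (m - |r|) ^ 2 * Real.sign r ^ 2 := by
          nth_rw 2 [← Real.abs_mul_sign r]; ring
      _ = (m - |r|) ^ 2 := by rw [Real.sign_sq_of_ne_zero hr, mul_one]
  have hbias : (K * |r| - |r|) ^ 2 = (K - 1) ^ 2 * r ^ 2 := by rw [← sq_abs r]; ring
  set F := Int.fract (K * |r|)
  push_cast
  rw [hsq, hsq]
  calc _ = ((1 - F) * (⌊K * |r|⌋ - |r|) ^ 2 + F * (⌊K * |r|⌋ + 1 - |r|) ^ 2 + R) / K := by ring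
    _ = (F * (1 - F) + (K - 1) ^ 2 * r ^ 2 + R) / K := by
      rw [stochastic_rounding_second_moment, hbias]
    _ ≤ _ := by gcongr; nlinarith [sq_nonneg (F - 1 / 2)]

end Spawning

theorem fciqmc_spawning_bound_general {Ω : Type*} {mΩ : MeasurableSpace Ω}
    (μ : Measure Ω) [IsProbabilityMeasure μ] {N : ℕ}
    (a : Fin N → ℝ) (S : Finset (Fin N))
    (hS : S = Finset.univ.filter (fun j => a j ≠ 0))
    (hK : 1 ≤ S.card)
    (J : Ω → Fin N) (n : Ω → ℕ) (X : Ω → Fin N → ℝ)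
    (hJmeas : Measurable J) (hnmeas : Measurable n)
    (hlaw1 : ∀ j ∈ S,
      μ {ω | J ω = j ∧ (n ω : ℤ) = ⌊(S.card : ℝ) * |a j|⌋} =
        ENNReal.ofReal ((1 - Int.fract ((S.card : ℝ) * |a j|)) / S.card))
    (hlaw2 : ∀ j ∈ S,
      μ {ω | J ω = j ∧ (n ω : ℤ) = ⌊(S.card : ℝ) * |a j|⌋ + 1} =
        ENNReal.ofReal (Int.fract ((S.card : ℝ) * |a j|) / S.card))
    (hX : ∀ ω, X ω = fun i =>
      if i = J ω then (n ω : ℝ) * Real.sign (a (J ω)) else 0) :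
    (∫ ω, X ω ∂μ) = a ∧
      ∫ ω, ∑ i, (X ω i - a i) ^ 2 ∂μ ≤
        ((S.card : ℝ) - 1) * (∑ i, (a i) ^ 2) + 1 / 4 := by
  have hKpos : (0 : ℝ) < S.card := by exact_mod_cast hK
  have ha : ∀ j ∈ S, a j ≠ 0 := fun j hj => by simpa [hS] using hj
  have hsum_support : ∀ {M : Type} [AddCommMonoid M] (f : Fin N → M), (∀ j, f j ≠ 0 → a j ≠ 0) →
      ∑ j ∈ S, f j = ∑ j, f j :=
    fun f hf => by rw [hS]; exact sum_filter_of_ne fun j _ => hf j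
  have hXJ : ∀ ω, X ω = Pi.single (J ω) (((n ω : ℤ) : ℝ) * Real.sign (a (J ω))) := fun ω => by
    ext i; simp [hX, Pi.single_apply]
  constructor
  · simp_rw [hXJ]
    rw [integral_comp_uniform_stochastic_rounding μ S (card_pos.mp hK) (fun j => S.card * |a j|)
      J n hJmeas hnmeas hlaw1 hlaw2 fun j m => Pi.single j ((m : ℝ) * Real.sign (a j)),
      sum_congr rfl fun j _ => spawn_mean_single hKpos.ne' (a j) j,
      hsum_support _ fun j h => by simpa using h, univ_sum_single]
  · simp_rw [hXJ, sum_sq_single_sub]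
    rw [integral_comp_uniform_stochastic_rounding μ S (card_pos.mp hK) (fun j => S.card * |a j|)
      J n hJmeas hnmeas hlaw1 hlaw2
      fun j m => ((m : ℝ) * Real.sign (a j) - a j) ^ 2 + (∑ i, a i ^ 2 - a j ^ 2)]
    simp only [smul_eq_mul]
    calc _ ≤ ∑ j ∈ S, (1 / 4 + (S.card - 1) ^ 2 * a j ^ 2 + (∑ i, a i ^ 2 - a j ^ 2)) / S.card :=
          sum_le_sum fun j hj => spawn_sq_error_le hKpos (ha j hj) _
      _ = _ := by
        rw [← sum_div, sum_add_distrib, sum_add_distrib, sum_sub_distrib, ← mul_sum,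
          hsum_support (fun j => a j ^ 2) fun j h => by simpa using h, sum_const, sum_const,
          nsmul_eq_mul, nsmul_eq_mul]
        field_simp
        ring

/-- FCIQMC spawning error bound: pick a location `J` uniformly among the
`K = ‖a‖₀` nonzero entries of `a`, spawn `n` children by stochastic rounding of
`K|a(J)|`, and set `X = n · sgn(a(J)) · e_J`. Then `E[X] = a` and
`E[‖X − a‖₂²] ≤ (K − 1)‖a‖₂² + 1/4`. -/
theorem fciqmc_spawning_bound {Ω : Type*} {mΩ : MeasurableSpace Ω}
    (μ : Measure Ω) [IsProbabilityMeasure μ] {N : ℕ}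
    (a : Fin N → ℝ) (S : Finset (Fin N))
    (hS : S = Finset.univ.filter (fun j => a j ≠ 0))
    (hK : 1 ≤ S.card)
    (J : Ω → Fin N) (n : Ω → ℕ) (X : Ω → Fin N → ℝ)
    (hJmeas : Measurable J) (hnmeas : Measurable n)
    (hJS : ∀ᵐ ω ∂μ, J ω ∈ S)
    (hlaw1 : ∀ j ∈ S,
      μ {ω | J ω = j ∧ (n ω : ℤ) = ⌊(S.card : ℝ) * |a j|⌋} =
        ENNReal.ofReal ((1 - Int.fract ((S.card : ℝ) * |a j|)) / S.card))
    (hlaw2 : ∀ j ∈ S,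
      μ {ω | J ω = j ∧ (n ω : ℤ) = ⌊(S.card : ℝ) * |a j|⌋ + 1} =
        ENNReal.ofReal (Int.fract ((S.card : ℝ) * |a j|) / S.card))
    (hX : ∀ ω, X ω = fun i =>
      if i = J ω then (n ω : ℝ) * Real.sign (a (J ω)) else 0) :
    (∫ ω, X ω ∂μ) = a ∧
      ∫ ω, ∑ i, (X ω i - a i) ^ 2 ∂μ ≤
        ((S.card : ℝ) - 1) * (∑ i, (a i) ^ 2) + 1 / 4 :=
  fciqmc_spawning_bound_general (mΩ := mΩ) μ a S hS hK J n X hJmeas hnmeas hlaw1 hlaw2 hX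
end

section
/- (Monotonicity of tail averages) Let v ∈ R^N with entries sorted so that |v(q_1)| ≥ |v(q_2)| ≥ ... ≥ |v(q_N)|, and let m ≤ N. If |v(q_i)| ≥ (Σ_{j=i}^N |v(q_j)|)/(m+1−i) for all i ≤ τ, then (Σ_{j=τ+1}^N |v(q_j)|)/(m−τ) ≤ ‖v‖_1/m. -/
open Finset

/-- Monotonicity of tail averages in the FRI compression: if the entries of `a`
are sorted by decreasing absolute value and the first `τ` entries are `large`,
i.e. `|a i| ≥ (Σ_{j ≥ i} |a j|)/(m − i)` for all `i < τ`, then the average of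
the remaining tail satisfies `(Σ_{j ≥ τ} |a j|)/(m − τ) ≤ ‖a‖₁/m`. -/
theorem tail_average_monotone {N m τ : ℕ} (hm : 0 < m) (hmN : m < N)
    (hτ : τ ≤ m) (a : Fin N → ℝ)
    (hsort : Antitone fun i => |a i|)
    (hlarge : ∀ i : Fin N, (i : ℕ) < τ →
      (∑ j ∈ Finset.Ici i, |a j|) / ((m : ℝ) - (i : ℕ)) ≤ |a i|) :
    (∑ j ∈ Finset.univ.filter (fun j : Fin N => τ ≤ (j : ℕ)), |a j|) /
        ((m : ℝ) - τ) ≤ (∑ j, |a j|) / m := by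
  set T : ℕ → ℝ := fun k => ∑ j ∈ Finset.univ.filter (fun j : Fin N => k ≤ (j : ℕ)), |a j|
    with hT
  have hTnonneg : ∀ k, 0 ≤ T k := fun k =>
    Finset.sum_nonneg fun j _ => abs_nonneg _
  have key : ∀ k, k ≤ τ → T k / ((m : ℝ) - k) ≤ (∑ j, |a j|) / m := by
    intro k hk
    induction k with
    | zero =>
      have : Finset.univ.filter (fun j : Fin N => 0 ≤ (j : ℕ)) = Finset.univ := by
        ext j; simp
      simp only [hT, this, Nat.cast_zero, sub_zero]
      exact le_rfl
    | succ k ih =>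
      have hk' : k < τ := hk
      have hkm : k < m := lt_of_lt_of_le hk' hτ
      have hkN : k < N := lt_trans hkm hmN
      have ihk := ih (le_of_lt hk')
      set c : ℝ := |a ⟨k, hkN⟩| with hc
      have hsplit : T k = c + T (k + 1) := by
        have hins : Finset.univ.filter (fun j : Fin N => k ≤ (j : ℕ)) =
            insert (⟨k, hkN⟩ : Fin N)
              (Finset.univ.filter (fun j : Fin N => k + 1 ≤ (j : ℕ))) := by
          ext j
          simp only [Finset.mem_filter, Finset.mem_univ, true_and, Finset.mem_insert,
            Fin.ext_iff]
          omega
        have hnotin : (⟨k, hkN⟩ : Fin N) ∉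
            Finset.univ.filter (fun j : Fin N => k + 1 ≤ (j : ℕ)) := by
          simp only [Finset.mem_filter, Finset.mem_univ, true_and]
          omega
        simp only [hT, hins]
        rw [Finset.sum_insert hnotin]
      have hIci : Finset.Ici (⟨k, hkN⟩ : Fin N) =
          Finset.univ.filter (fun j : Fin N => k ≤ (j : ℕ)) := by
        ext j
        simp [Fin.le_def]
      have hlarge' : T k / ((m : ℝ) - k) ≤ c := by
        have := hlarge ⟨k, hkN⟩ hk'
        rwa [hIci] at this
      have hd0 : (0 : ℝ) < (m : ℝ) - k := by
        have : (k : ℝ) < m := by exact_mod_cast hkm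
        linarith
      have hcb : T k ≤ c * ((m : ℝ) - k) := (div_le_iff₀ hd0).mp hlarge'
      have hcnn : 0 ≤ c := abs_nonneg _
      have h1 : T (k + 1) / ((m : ℝ) - (k + 1 : ℕ)) ≤ T k / ((m : ℝ) - k) := by
        rcases eq_or_lt_of_le (Nat.succ_le_of_lt hkm) with heq | hlt
        · have hz : ((m : ℝ) - (k + 1 : ℕ)) = 0 := by
            push_cast
            have : (m : ℝ) = (k : ℝ) + 1 := by exact_mod_cast heq.symm
            linarith
          rw [hz, div_zero]
          exact div_nonneg (hTnonneg k) hd0.le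
        · have hd1 : (0 : ℝ) < (m : ℝ) - (k + 1 : ℕ) := by
            push_cast
            have : ((k : ℝ) + 1) < m := by exact_mod_cast hlt
            linarith
          rw [div_le_div_iff₀ hd1 hd0]
          push_cast at *
          nlinarith [hTnonneg (k + 1)]
      exact le_trans h1 ihk
  exact key τ le_rfl
end

section
/- (Systematic sampling almost sure bound) Let v' ∈ R^n with s = ‖v'‖_1 > 0 and W ∈ R^n with W(i) = sgn(v'(i)) N_i s/m', where N_i ∈ {0,1}, Σ_i N_i = m' almost surely, and |v'(i)| ≤ s/m' for all i. Then ‖W − v'‖_2² ≤ Σ_{i: N_i=0} v'(i)² + m'(s/m')² ≤ 2s²/m' almost surely. -/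
open Finset

lemma sign_sq_bound (v t : ℝ) (ht : 0 ≤ t) (hv : |v| ≤ t) :
    (Real.sign v * t - v) ^ 2 ≤ t ^ 2 := by
  rcases lt_trichotomy v 0 with h | h | h
  · rw [Real.sign_of_neg h]
    rw [abs_le] at hv
    nlinarith
  · simp [h, Real.sign_zero]
    positivity
  · rw [Real.sign_of_pos h]
    rw [abs_le] at hv
    nlinarith

/-- Systematic sampling almost sure bound: if `N_i ∈ {0,1}` with exactly `m'`
ones, `|v'(i)| ≤ s/m'` for all `i` where `s = ‖v'‖₁`, and
`W(i) = sgn(v'(i)) N_i s/m'`, then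
`‖W − v'‖₂² ≤ Σ_{i : N_i = 0} v'(i)² + m' (s/m')² ≤ 2 s²/m'`. -/
theorem systematic_sampling_as_bound {n : ℕ}
    (v' : Fin n → ℝ) (s : ℝ) (hs : s = ∑ i, |v' i|) (hspos : 0 < s)
    (m' : ℕ) (hm' : 1 ≤ m')
    (Nv : Fin n → ℝ) (h01 : ∀ i, Nv i = 0 ∨ Nv i = 1)
    (hsum : ∑ i, Nv i = (m' : ℝ))
    (hsmall : ∀ i, |v' i| ≤ s / m')
    (W : Fin n → ℝ)
    (hW : ∀ i, W i = Real.sign (v' i) * Nv i * (s / m')) :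
    ∑ i, (W i - v' i) ^ 2 ≤
        (∑ i ∈ Finset.univ.filter (fun i => Nv i = 0), (v' i) ^ 2) +
          (m' : ℝ) * (s / m') ^ 2 ∧
      (∑ i ∈ Finset.univ.filter (fun i => Nv i = 0), (v' i) ^ 2) +
          (m' : ℝ) * (s / m') ^ 2 ≤ 2 * s ^ 2 / m' := by
  have hm'pos : (0 : ℝ) < m' := by exact_mod_cast hm'
  have ht : 0 ≤ s / m' := by positivity
  -- partition univ by Nv = 0
  have hsplit : (Finset.univ : Finset (Fin n)) =
      (Finset.univ.filter (fun i => Nv i = 0)) ∪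
      (Finset.univ.filter (fun i => Nv i = 1)) := by
    ext i
    simp only [Finset.mem_union, Finset.mem_filter, Finset.mem_univ, true_and]
    rcases h01 i with h | h <;> simp [h]
  have hdisj : Disjoint (Finset.univ.filter (fun i => Nv i = 0))
      (Finset.univ.filter (fun i => Nv i = 1)) := by
    rw [Finset.disjoint_filter]
    intro i _ h0 h1
    rw [h0] at h1; norm_num at h1
  -- card of ones
  have hcard : (((Finset.univ.filter (fun i => Nv i = 1)).card : ℝ)) = (m' : ℝ) := by
    have h1 : ∑ i ∈ Finset.univ.filter (fun i => Nv i = 1), Nv i = (m' : ℝ) := by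
      rw [Finset.sum_filter_of_ne (fun x _ hx => (h01 x).resolve_left hx)]
      exact hsum
    rw [← h1, Finset.sum_congr rfl (fun i hi => (Finset.mem_filter.mp hi).2)]
    simp
  have key : ∑ i, (W i - v' i) ^ 2 =
      (∑ i ∈ Finset.univ.filter (fun i => Nv i = 0), (W i - v' i) ^ 2) +
      (∑ i ∈ Finset.univ.filter (fun i => Nv i = 1), (W i - v' i) ^ 2) := by
    conv_lhs => rw [hsplit]
    exact Finset.sum_union hdisj
  constructor
  · rw [key]
    gcongr ?_ + ?_
    · apply le_of_eq
      apply Finset.sum_congr rfl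
      intro i hi
      have h0 := (Finset.mem_filter.mp hi).2
      rw [hW i, h0]
      ring
    · calc ∑ i ∈ Finset.univ.filter (fun i => Nv i = 1), (W i - v' i) ^ 2
          ≤ ∑ _i ∈ Finset.univ.filter (fun i => Nv i = 1), (s / m') ^ 2 := by
            apply Finset.sum_le_sum
            intro i hi
            have h1 := (Finset.mem_filter.mp hi).2
            rw [hW i, h1, mul_one]
            exact sign_sq_bound (v' i) (s / m') ht (hsmall i)
        _ = (m' : ℝ) * (s / m') ^ 2 := by
            rw [Finset.sum_const, nsmul_eq_mul, hcard]
  · have h1 : (∑ i ∈ Finset.univ.filter (fun i => Nv i = 0), (v' i) ^ 2) ≤ s ^ 2 / m' := by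
      calc (∑ i ∈ Finset.univ.filter (fun i => Nv i = 0), (v' i) ^ 2)
          ≤ ∑ i ∈ Finset.univ.filter (fun i => Nv i = 0), |v' i| * (s / m') := by
            apply Finset.sum_le_sum
            intro i _
            calc (v' i) ^ 2 = |v' i| * |v' i| := by rw [← sq_abs]; ring
              _ ≤ |v' i| * (s / m') :=
                  mul_le_mul_of_nonneg_left (hsmall i) (abs_nonneg _)
        _ ≤ ∑ i, |v' i| * (s / m') := by
            apply Finset.sum_le_sum_of_subset_of_nonneg (Finset.filter_subset _ _)
            intro i _ _
            positivity
        _ = s * (s / m') := by rw [← Finset.sum_mul, ← hs]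
        _ = s ^ 2 / m' := by ring
    have h2 : (m' : ℝ) * (s / m') ^ 2 = s ^ 2 / m' := by
      field_simp
    rw [h2]
    calc _ ≤ s ^ 2 / m' + s ^ 2 / m' := by gcongr
      _ = 2 * s ^ 2 / m' := by ring
end

section
/- (Biased case second moment bound) Let v_t = A^t v_0 + Σ_{s=1}^t A^{t-s}ξ_s where A is symmetric PSD with largest eigenvalue λ_1 = ‖A‖_2 ≤ ‖A‖_1, u_1 a unit eigenvector for λ_1, and E[‖ξ_s‖_2²] ≤ C_e ‖A‖_1^{2s} ‖v_0‖_1²/m for all s (no unbiasedness assumed). Then E[(u_1^T v_t − λ_1^t u_1^T v_0)²] ≤ C_e t² ‖A‖_1^{2t} ‖v_0‖_1² / m. -/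
/-! Since `A` is symmetric and `A u₁ = λ₁ u₁`, pairing with `u₁` turns `A^k` into `λ₁^k`, so
`u₁ᵀ v_t − λ₁^t u₁ᵀ v₀ = Σ_{s ≤ t} λ₁^{t-s} u₁ᵀ ξ_s`. Cauchy–Schwarz over the `t` summands and
over the coordinates (with `‖u₁‖₂ = 1`) bounds its square by `t Σ_s λ₁^{2(t-s)} ‖ξ_s‖₂²`; taking
expectations, each summand is at most `C_e ‖A‖₁^{2t} ‖v₀‖₁² / m` because `0 ≤ λ₁ ≤ ‖A‖₁`. No
cancellation between the `ξ_s` is used, which is why no unbiasedness is needed and the bound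
grows like `t²`. -/

open MeasureTheory Matrix Finset

/-- The induced 1-norm of a matrix: maximum absolute column sum. -/
noncomputable def matNorm1 {N : ℕ} (A : Matrix (Fin N) (Fin N) ℝ) : ℝ :=
  ⨆ j, ∑ i, |A i j|

namespace Matrix

variable {R n : Type*} [CommSemiring R] [Fintype n] [DecidableEq n]
  {A : Matrix n n R} {u : n → R} {c : R}

theorem pow_mulVec_eq_pow_smul_of_mulVec_eq_smul (h : A *ᵥ u = c • u) (k : ℕ) :
    (A ^ k) *ᵥ u = c ^ k • u := by
  induction k with
  | zero => simp
  | succ k ih =>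
    rw [pow_succ', ← mulVec_mulVec, ih, mulVec_smul, h, smul_smul, ← pow_succ]

theorem IsSymm.dotProduct_pow_mulVec_of_mulVec_eq_smul (hA : A.IsSymm) (h : A *ᵥ u = c • u)
    (k : ℕ) (x : n → R) : u ⬝ᵥ ((A ^ k) *ᵥ x) = c ^ k * (u ⬝ᵥ x) := by
  rw [dotProduct_mulVec, ← mulVec_transpose, transpose_pow, hA.eq,
    pow_mulVec_eq_pow_smul_of_mulVec_eq_smul h, smul_dotProduct, smul_eq_mul]

end Matrix

theorem sq_dotProduct_le_sum_sq_of_sum_sq_eq_one {R n : Type*} [CommRing R] [LinearOrder R]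
    [IsStrictOrderedRing R] [Fintype n] {u : n → R} (hu : ∑ i, u i ^ 2 = 1) (x : n → R) :
    (u ⬝ᵥ x) ^ 2 ≤ ∑ i, x i ^ 2 := by
  simpa [dotProduct, hu] using sum_mul_sq_le_sq_mul_sq univ u x

section Integral

variable {Ω : Type*} {mΩ : MeasurableSpace Ω} {μ : Measure Ω}

theorem MeasureTheory.MemLp.integrable_sum_sq {n : Type*} [Fintype n] {f : Ω → n → ℝ}
    (hf : MemLp f 2 μ) :
    Integrable (fun ω ↦ ∑ i, f ω i ^ 2) μ :=
  integrable_finsetSum _ fun i _ ↦ (hf.eval i).integrable_sq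

theorem integral_sq_sum_le_card_mul_sum_integral {ι : Type*} {S : Finset ι} {g h : ι → Ω → ℝ}
    (hh : ∀ s ∈ S, Integrable (h s) μ) (hgh : ∀ s ∈ S, ∀ ω, g s ω ^ 2 ≤ h s ω) :
    ∫ ω, (∑ s ∈ S, g s ω) ^ 2 ∂μ ≤ #S * ∑ s ∈ S, ∫ ω, h s ω ∂μ := by
  have hmajorant : ∀ ω, (∑ s ∈ S, g s ω) ^ 2 ≤ #S * ∑ s ∈ S, h s ω := fun ω ↦
    sq_sum_le_card_mul_sum_sq.trans <|
      mul_le_mul_of_nonneg_left (sum_le_sum fun s hs ↦ hgh s hs ω) (Nat.cast_nonneg _)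
  calc ∫ ω, (∑ s ∈ S, g s ω) ^ 2 ∂μ ≤ ∫ ω, #S * ∑ s ∈ S, h s ω ∂μ :=
        integral_mono_of_nonneg (.of_forall fun ω ↦ sq_nonneg _)
          ((integrable_finsetSum S hh).const_mul _) (.of_forall hmajorant)
    _ = #S * ∑ s ∈ S, ∫ ω, h s ω ∂μ := by
        rw [integral_const_mul, integral_finsetSum S hh]

end Integral

theorem pow_sub_mul_le_pow_mul {a b x y : ℝ} {s t : ℕ} (ha : 0 ≤ a) (hab : a ≤ b) (hx : 0 ≤ x)
    (hxy : x ≤ b ^ s * y) (hst : s ≤ t) : a ^ (t - s) * x ≤ b ^ t * y := by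
  calc a ^ (t - s) * x ≤ b ^ (t - s) * (b ^ s * y) :=
        mul_le_mul (pow_le_pow_left₀ ha hab _) hxy hx (pow_nonneg (ha.trans hab) _)
    _ = b ^ t * y := by rw [← mul_assoc, ← pow_add, Nat.sub_add_cancel hst]

theorem biased_second_moment_bound_general {Ω : Type*} {mΩ : MeasurableSpace Ω}
    (μ : Measure Ω) [IsProbabilityMeasure μ] {N : ℕ}
    (A : Matrix (Fin N) (Fin N) ℝ) (hA : A.IsSymm)
    (u1 : Fin N → ℝ) (lam1 : ℝ) (heig : A *ᵥ u1 = lam1 • u1)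
    (hunit : ∑ i, (u1 i) ^ 2 = 1)
    (hlam : lam1 = ‖Matrix.toEuclideanCLM (𝕜 := ℝ) A‖)
    (hle : lam1 ≤ matNorm1 A)
    (v0 : Fin N → ℝ) (ξ : ℕ → Ω → (Fin N → ℝ))
    (Ce m : ℝ)
    (hL2 : ∀ s, MemLp (ξ s) 2 μ)
    (hbound : ∀ s, 1 ≤ s →
      ∫ ω, ∑ i, (ξ s ω i) ^ 2 ∂μ ≤ Ce * (matNorm1 A) ^ (2 * s) * (∑ i, |v0 i|) ^ 2 / m)
    (t : ℕ)
    (vt : Ω → (Fin N → ℝ))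
    (hvt : ∀ ω, vt ω = (A ^ t) *ᵥ v0 + ∑ s ∈ Finset.Icc 1 t, (A ^ (t - s)) *ᵥ ξ s ω) :
    ∫ ω, (u1 ⬝ᵥ vt ω - lam1 ^ t * (u1 ⬝ᵥ v0)) ^ 2 ∂μ ≤
      Ce * (t : ℝ) ^ 2 * (matNorm1 A) ^ (2 * t) * (∑ i, |v0 i|) ^ 2 / m := by
  set K := Ce * (∑ i, |v0 i|) ^ 2 / m
  have hlam0 : 0 ≤ lam1 := hlam ▸ norm_nonneg _
  have hdot := hA.dotProduct_pow_mulVec_of_mulVec_eq_smul heig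
  have hdecomp : ∀ ω, u1 ⬝ᵥ vt ω - lam1 ^ t * (u1 ⬝ᵥ v0)
      = ∑ s ∈ Icc 1 t, lam1 ^ (t - s) * (u1 ⬝ᵥ ξ s ω) := fun ω ↦ by
    simp only [hvt ω, dotProduct_add, dotProduct_sum, hdot, add_sub_cancel_left]
  have hsq : ∀ s ∈ Icc 1 t, ∀ ω, (lam1 ^ (t - s) * (u1 ⬝ᵥ ξ s ω)) ^ 2
      ≤ lam1 ^ (2 * (t - s)) * ∑ i, ξ s ω i ^ 2 := fun s _ ω ↦ by
    rw [mul_pow, ← pow_mul, mul_comm (t - s)]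
    exact mul_le_mul_of_nonneg_left (sq_dotProduct_le_sum_sq_of_sum_sq_eq_one hunit _)
      (by positivity)
  have hterm : ∀ s ∈ Icc 1 t, ∫ ω, lam1 ^ (2 * (t - s)) * ∑ i, ξ s ω i ^ 2 ∂μ
      ≤ matNorm1 A ^ (2 * t) * K := fun s hs ↦ by
    rw [integral_const_mul, Nat.mul_sub]
    exact pow_sub_mul_le_pow_mul hlam0 hle
      (integral_nonneg fun ω ↦ sum_nonneg fun i _ ↦ sq_nonneg _)
      ((hbound s (mem_Icc.1 hs).1).trans_eq (by ring)) (by linarith [(mem_Icc.1 hs).2])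
  simp_rw [hdecomp]
  calc _ ≤ #(Icc 1 t) * ∑ s ∈ Icc 1 t, ∫ ω, lam1 ^ (2 * (t - s)) * ∑ i, ξ s ω i ^ 2 ∂μ :=
        integral_sq_sum_le_card_mul_sum_integral
          (fun s _ ↦ (hL2 s).integrable_sum_sq.const_mul _) hsq
    _ ≤ #(Icc 1 t) * ∑ s ∈ Icc 1 t, matNorm1 A ^ (2 * t) * K :=
        mul_le_mul_of_nonneg_left (sum_le_sum hterm) (Nat.cast_nonneg _)
    _ = _ := by
        rw [sum_const, Nat.card_Icc, Nat.add_sub_cancel, nsmul_eq_mul]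
        ring

/-- Biased case second moment bound: if `v_t = A^t v₀ + Σ_{s=1}^t A^{t-s} ξ_s`
with `A` symmetric PSD, `u₁` a unit eigenvector for the largest eigenvalue
`λ₁ = ‖A‖₂ ≤ ‖A‖₁`, and `E‖ξ_s‖₂² ≤ C_e ‖A‖₁^{2s} ‖v₀‖₁²/m` (no unbiasedness),
then `E[(u₁ᵀ v_t − λ₁^t u₁ᵀ v₀)²] ≤ C_e t² ‖A‖₁^{2t} ‖v₀‖₁²/m`. -/
theorem biased_second_moment_bound {Ω : Type*} {mΩ : MeasurableSpace Ω}
    (μ : Measure Ω) [IsProbabilityMeasure μ] {N : ℕ}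
    (A : Matrix (Fin N) (Fin N) ℝ) (hA : A.IsSymm) (hpsd : A.PosSemidef)
    (u1 : Fin N → ℝ) (lam1 : ℝ) (heig : A *ᵥ u1 = lam1 • u1)
    (hunit : ∑ i, (u1 i) ^ 2 = 1)
    (hlam : lam1 = ‖Matrix.toEuclideanCLM (𝕜 := ℝ) A‖)
    (hle : lam1 ≤ matNorm1 A)
    (v0 : Fin N → ℝ) (ξ : ℕ → Ω → (Fin N → ℝ))
    (Ce m : ℝ) (hCe : 0 < Ce) (hm : 0 < m)
    (hL2 : ∀ s, MemLp (ξ s) 2 μ)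
    (hbound : ∀ s, 1 ≤ s →
      ∫ ω, ∑ i, (ξ s ω i) ^ 2 ∂μ ≤ Ce * (matNorm1 A) ^ (2 * s) * (∑ i, |v0 i|) ^ 2 / m)
    (t : ℕ) (ht : 1 ≤ t)
    (vt : Ω → (Fin N → ℝ))
    (hvt : ∀ ω, vt ω = (A ^ t) *ᵥ v0 + ∑ s ∈ Finset.Icc 1 t, (A ^ (t - s)) *ᵥ ξ s ω) :
    ∫ ω, (u1 ⬝ᵥ vt ω - lam1 ^ t * (u1 ⬝ᵥ v0)) ^ 2 ∂μ ≤
      Ce * (t : ℝ) ^ 2 * (matNorm1 A) ^ (2 * t) * (∑ i, |v0 i|) ^ 2 / m :=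
  biased_second_moment_bound_general (mΩ := mΩ) μ A hA u1 lam1 heig hunit hlam hle v0 ξ Ce m hL2
    hbound t vt hvt
end
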